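/- arXiv:math/0211217 — 2 statements merged into one kernel-verified Lean document; each statement's English description precedes it below -/
import Mathlib

section
/- Let λ ∈ K with dist(λ, q^{ℤ_p}) = |p|^{k+ε}|q-1| where k ∈ ℤ_{≥0} and ε ∈ [0,1). Then the series Λ(x) = Σ_{n≥1} ((λ-1)(λ-q)···(λ-q^{n-1}) / ((q-1)···(q^n-1))) x^n converges for |x| < |p|^{-(1/p^k)(ε/p - 1/(p-1))}. -/
/-!
Write `r = |q - 1|` and `|π| = |p|^{1/(p-1)}`. Since `r < |π|`, the binomial estimate
`|n| |binom(β, n)| ≤ |β|` together with `|n| ≥ |π|^{n-1}` makes `α ↦ q^α` an `r`-Lipschitz map on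
`ℤ_p`, and makes the linear term of `q^m - 1 = Σ binom(m, n) (q - 1)^n` dominant, so
`|q^m - 1| ≥ |m| r`; hence the denominator of the `n`-th coefficient has norm at least
`|n!| r^n ≥ (|π| r)^n`. Pick `α` with `|λ - q^α|` within a factor `C > 1` of the distance
`|p|^{k+ε} r`: then `|λ - q^i| ≤ C r max(|p|^{k+ε}, |α - i|)`. Among `0 ≤ i < n`, at least
`n/p^j - 1` satisfy `v_p(α - i) ≥ j`, so the product of these maxima is at most
`|p|^{nθ - k - ε}` with `θ = Σ_{j ≤ k} p^{-j} + ε p^{-k-1}`. The coefficients thus grow at most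
geometrically with ratio `C |p|^θ / |π|`, and `|π| / |p|^θ` is the radius in the statement.
-/

open Finset

section Prime

variable {p : ℕ} [hp : Fact p.Prime]

lemma one_lt_natCast_prime : (1 : ℝ) < p := by exact_mod_cast hp.out.one_lt

lemma inv_natCast_prime_pos : 0 < (p : ℝ)⁻¹ :=
  inv_pos.mpr (zero_lt_one.trans one_lt_natCast_prime)

lemma inv_natCast_prime_lt_one : (p : ℝ)⁻¹ < 1 := inv_lt_one_of_one_lt₀ one_lt_natCast_prime

lemma sum_Icc_inv_natCast_prime_pow (k : ℕ) :
    ∑ j ∈ Icc 1 k, (p : ℝ)⁻¹ ^ j = (1 - (p : ℝ)⁻¹ ^ k) / ((p : ℝ) - 1) := by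
  have hp0 : (p : ℝ) ≠ 0 := by linarith [one_lt_natCast_prime (p := p)]
  have hp1 : (p : ℝ) - 1 ≠ 0 := by linarith [one_lt_natCast_prime (p := p)]
  induction k with
  | zero => simp
  | succ k ih =>
    rw [sum_Icc_succ_top (by omega), ih, inv_pow, inv_pow]
    field_simp
    ring

end Prime

/-- `|π| = |p|^{1/(p-1)}`, the absolute value of a root of `π^{p-1} = -p`. -/
noncomputable def normPi (p : ℕ) : ℝ := (p : ℝ) ^ (-1 / ((p : ℝ) - 1))

section normPi

variable {p : ℕ} [hp : Fact p.Prime]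

lemma normPi_pos : 0 < normPi p :=
  Real.rpow_pos_of_pos (zero_lt_one.trans one_lt_natCast_prime) _

lemma normPi_lt_one : normPi p < 1 :=
  Real.rpow_lt_one_of_one_lt_of_neg one_lt_natCast_prime
    (div_neg_of_neg_of_pos (by norm_num) (by linarith [one_lt_natCast_prime (p := p)]))

lemma normPi_pow_le_norm_natCast_of_le {m N : ℕ} (hm : m ≠ 0)
    (h : padicValNat p m * (p - 1) ≤ N) : normPi p ^ N ≤ ‖(m : ℤ_[p])‖ := by
  have hP := one_lt_natCast_prime (p := p)
  have hreal : ((padicValNat p m * (p - 1) : ℕ) : ℝ) ≤ N := by exact_mod_cast h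
  rw [Nat.cast_mul, Nat.cast_sub hp.out.one_le, Nat.cast_one] at hreal
  rw [PadicInt.norm_def, PadicInt.coe_natCast,
    Padic.norm_eq_zpow_neg_valuation (by exact_mod_cast hm), Padic.valuation_natCast, normPi,
    ← Real.rpow_natCast, ← Real.rpow_mul (by linarith), ← Real.rpow_intCast,
    Real.rpow_le_rpow_left_iff hP, Int.cast_neg, Int.cast_natCast, div_mul_eq_mul_div,
    div_le_iff₀ (by linarith)]
  linarith

lemma normPi_pow_le_norm_natCast {n : ℕ} (hn : n ≠ 0) :
    normPi p ^ (n - 1) ≤ ‖(n : ℤ_[p])‖ := by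
  refine normPi_pow_le_norm_natCast_of_le hn ?_
  have hdvd : p ^ padicValNat p n ≤ n :=
    Nat.le_of_dvd (Nat.pos_of_ne_zero hn) pow_padicValNat_dvd
  have hbern := one_add_mul_le_pow (a := (p : ℤ) - 1) (by linarith [hp.out.two_le])
    (padicValNat p n)
  rw [add_sub_cancel] at hbern
  have hdvd' : ((p ^ padicValNat p n : ℕ) : ℤ) ≤ n := Nat.cast_le.mpr hdvd
  rw [Nat.cast_pow] at hdvd'
  rw [← Nat.cast_le (α := ℤ), Nat.cast_mul, Nat.cast_sub hp.out.one_le,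
    Nat.cast_sub (Nat.one_le_iff_ne_zero.mpr hn), Nat.cast_one]
  linarith

lemma normPi_pow_le_norm_factorial (n : ℕ) : normPi p ^ n ≤ ‖(n.factorial : ℤ_[p])‖ := by
  refine normPi_pow_le_norm_natCast_of_le n.factorial_ne_zero ?_
  have h := sub_one_mul_padicValNat_factorial (p := p) n
  rw [mul_comm]
  omega

end normPi

namespace PadicInt

variable {p : ℕ} [hp : Fact p.Prime]

open Polynomial in
lemma coe_choose_eq (α : ℤ_[p]) (n : ℕ) :
    ((Ring.choose α n : ℤ_[p]) : ℚ_[p]) =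
      (∏ i ∈ range n, ((α : ℚ_[p]) - i)) / (n.factorial : ℚ_[p]) := by
  have h := Ring.descPochhammer_eq_factorial_smul_choose α n
  rw [← aeval_eq_smeval, aeval_def, eval₂_eq_eval_map, descPochhammer_map,
    descPochhammer_eval_eq_prod_range, nsmul_eq_mul] at h
  rw [eq_div_iff (by exact_mod_cast n.factorial_ne_zero), mul_comm]
  have h' := congrArg Coe.ringHom h
  simp only [map_prod, map_sub, map_mul, map_natCast] at h'
  exact h'.symm

lemma norm_natCast_mul_norm_choose_le (β : ℤ_[p]) {n : ℕ} (hn : n ≠ 0) :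
    ‖(n : ℤ_[p])‖ * ‖Ring.choose β n‖ ≤ ‖β‖ := by
  have h := Ring.choose_smul_choose β (Nat.one_le_iff_ne_zero.mpr hn)
  rw [Nat.choose_one_right, nsmul_eq_mul, Ring.choose_one_right, Nat.cast_one] at h
  rw [← norm_mul, h, norm_mul]
  exact mul_le_of_le_one_right (norm_nonneg _) (norm_le_one _)

lemma norm_choose_mul_pow_le (β : ℤ_[p]) {n : ℕ} (hn : n ≠ 0) {r : ℝ} (hr : 0 ≤ r) :
    ‖Ring.choose β n‖ * r ^ n ≤ ‖β‖ * r * (r / normPi p) ^ (n - 1) := by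
  have hω := normPi_pos (p := p)
  have hpow : r ^ n = r * r ^ (n - 1) := by
    rw [← pow_succ', Nat.sub_add_cancel (Nat.one_le_iff_ne_zero.mpr hn)]
  rw [div_pow, hpow, mul_div_assoc', le_div_iff₀ (pow_pos hω _)]
  calc ‖Ring.choose β n‖ * (r * r ^ (n - 1)) * normPi p ^ (n - 1)
      ≤ ‖Ring.choose β n‖ * (r * r ^ (n - 1)) * ‖(n : ℤ_[p])‖ := by
        gcongr
        exact normPi_pow_le_norm_natCast hn
    _ = ‖(n : ℤ_[p])‖ * ‖Ring.choose β n‖ * (r * r ^ (n - 1)) := by ring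
    _ ≤ ‖β‖ * (r * r ^ (n - 1)) := by
        gcongr
        exact norm_natCast_mul_norm_choose_le β hn
    _ = _ := by ring

lemma norm_choose_sub_choose_mul_pow_le (α β : ℤ_[p]) (n : ℕ) {r : ℝ} (hr0 : 0 ≤ r)
    (hr : r ≤ normPi p) : ‖Ring.choose α n - Ring.choose β n‖ * r ^ n ≤ ‖α - β‖ * r := by
  rcases eq_or_ne n 0 with rfl | hn
  · simp only [Ring.choose_zero_right, sub_self, norm_zero, zero_mul]
    positivity
  rcases hr0.eq_or_lt with rfl | hrpos
  · simp [zero_pow hn]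
  have hω := normPi_pos (p := p)
  have hr1 : r ≤ 1 := hr.trans normPi_lt_one.le
  have hs : r / normPi p ≤ 1 := (div_le_one normPi_pos).mpr hr
  have hvandermonde : Ring.choose α n - Ring.choose β n =
      ∑ ij ∈ (antidiagonal n).erase (0, n), Ring.choose (α - β) ij.1 * Ring.choose β ij.2 := by
    rw [sum_erase_eq_sub (by simp), ← Ring.add_choose_eq n (Commute.all _ _), sub_add_cancel,
      Ring.choose_zero_right, one_mul]
  rw [hvandermonde, ← le_div_iff₀ (pow_pos hrpos n)]
  refine IsUltrametricDist.norm_sum_le_of_forall_le_of_nonneg (by positivity) fun ij hij => ?_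
  obtain ⟨hij0, hijn⟩ := mem_erase.mp hij
  rw [HasAntidiagonal.mem_antidiagonal] at hijn
  have hi : ij.1 ≠ 0 := fun h => hij0 (Prod.ext h (by omega))
  rw [le_div_iff₀ (pow_pos hrpos n), norm_mul, ← hijn, pow_add]
  calc ‖Ring.choose (α - β) ij.1‖ * ‖Ring.choose β ij.2‖ * (r ^ ij.1 * r ^ ij.2)
      ≤ ‖Ring.choose (α - β) ij.1‖ * 1 * (r ^ ij.1 * 1) := by
        gcongr
        exacts [norm_le_one _, pow_le_one₀ hr0 hr1]
    _ = ‖Ring.choose (α - β) ij.1‖ * r ^ ij.1 := by ring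
    _ ≤ ‖α - β‖ * r * (r / normPi p) ^ (ij.1 - 1) := norm_choose_mul_pow_le _ hi hr0
    _ ≤ ‖α - β‖ * r := mul_le_of_le_one_right (by positivity) (pow_le_one₀ (by positivity) hs)

lemma norm_sub_natCast_le_iff_modEq (α : ℤ_[p]) (j i : ℕ) :
    ‖α - (i : ℤ_[p])‖ ≤ (p : ℝ)⁻¹ ^ j ↔ (toZModPow j α).val ≡ i [MOD p ^ j] := by
  rw [inv_pow, ← zpow_natCast, ← zpow_neg, norm_le_pow_iff_mem_span_pow, ← ker_toZModPow,
    RingHom.mem_ker, map_sub, sub_eq_zero, map_natCast, ← ZMod.natCast_eq_natCast_iff,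
    ZMod.natCast_zmod_val]

lemma le_card_filter_norm_sub_natCast_le (α : ℤ_[p]) (j n : ℕ) :
    (n : ℝ) * (p : ℝ)⁻¹ ^ j - 1 ≤ #{i ∈ range n | ‖α - ((i : ℕ) : ℤ_[p])‖ ≤ (p : ℝ)⁻¹ ^ j} := by
  have hcount : n / p ^ j ≤ #{i ∈ range n | ‖α - ((i : ℕ) : ℤ_[p])‖ ≤ (p : ℝ)⁻¹ ^ j} := by
    simp_rw [norm_sub_natCast_le_iff_modEq, Nat.ModEq.comm (a := (toZModPow j α).val),
      ← Nat.count_eq_card_filter_range, Nat.count_modEq_card _ (pow_pos hp.out.pos j)]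
    exact Nat.le_add_right _ _
  calc (n : ℝ) * (p : ℝ)⁻¹ ^ j - 1 = (n : ℝ) / (p ^ j : ℕ) - 1 := by
        rw [inv_pow, div_eq_mul_inv, Nat.cast_pow]
    _ ≤ ⌊(n : ℝ) / (p ^ j : ℕ)⌋₊ := (Nat.sub_one_lt_floor _).le
    _ ≤ _ := by
        rw [Nat.floor_div_eq_div]
        exact_mod_cast hcount

/-- `min (v_p a, k + e)` for `0 ≤ e ≤ 1`, written as a sum over the levels `j` that `v_p a`
reaches. -/
noncomputable def truncVal (k : ℕ) (e : ℝ) (a : ℤ_[p]) : ℝ :=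
  (∑ j ∈ Icc 1 k, if ‖a‖ ≤ (p : ℝ)⁻¹ ^ j then 1 else 0) +
    e * if ‖a‖ ≤ (p : ℝ)⁻¹ ^ (k + 1) then 1 else 0

/-- The asymptotic mean of `truncVal k e (α - i)` over `0 ≤ i < n`: level `j` is reached by a
proportion `p⁻ʲ` of the `i`. -/
noncomputable def truncValMean (p k : ℕ) (e : ℝ) : ℝ :=
  ∑ j ∈ Icc 1 k, (p : ℝ)⁻¹ ^ j + e * (p : ℝ)⁻¹ ^ (k + 1)

lemma max_rpow_norm_le_rpow_truncVal (a : ℤ_[p]) (k : ℕ) {e : ℝ} (he0 : 0 ≤ e) (he1 : e ≤ 1) :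
    max ((p : ℝ)⁻¹ ^ ((k : ℝ) + e)) ‖a‖ ≤ (p : ℝ)⁻¹ ^ truncVal k e a := by
  have h0 := inv_natCast_prime_pos (p := p)
  have h1 := inv_natCast_prime_lt_one (p := p)
  unfold truncVal
  by_cases hc : ‖a‖ ≤ (p : ℝ)⁻¹ ^ (k + 1)
  · have hall : ∀ j ∈ Icc 1 k, ‖a‖ ≤ (p : ℝ)⁻¹ ^ j := fun j hj =>
      hc.trans (pow_le_pow_of_le_one h0.le h1.le (by simp at hj; omega))
    rw [sum_congr rfl fun j hj => if_pos (hall j hj), if_pos hc, sum_const, Nat.card_Icc,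
      Nat.add_sub_cancel, nsmul_one, mul_one]
    refine max_le le_rfl (hc.trans ?_)
    rw [← Real.rpow_natCast]
    exact Real.rpow_le_rpow_of_exponent_ge h0 h1.le (by push_cast; linarith)
  · have ha : a ≠ 0 := by
      rintro rfl
      exact hc (by simp)
    have hnorm : ‖a‖ = (p : ℝ)⁻¹ ^ a.valuation := by
      rw [norm_eq_zpow_neg_valuation ha, zpow_neg, zpow_natCast, inv_pow]
    simp_rw [hnorm, pow_le_pow_iff_right_of_lt_one₀ h0 h1] at hc ⊢
    have hv : a.valuation ≤ k := by omega
    have hlevels : {j ∈ Icc 1 k | j ≤ a.valuation} = Icc 1 a.valuation := by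
      ext j
      simp only [mem_filter, mem_Icc]
      omega
    rw [sum_boole, hlevels, Nat.card_Icc, Nat.add_sub_cancel, if_neg hc, mul_zero, add_zero,
      Real.rpow_natCast]
    refine max_le ?_ le_rfl
    rw [← Real.rpow_natCast]
    refine Real.rpow_le_rpow_of_exponent_ge h0 h1.le ?_
    have hv' : (a.valuation : ℝ) ≤ k := by exact_mod_cast hv
    linarith

lemma le_sum_truncVal (α : ℤ_[p]) (k : ℕ) {e : ℝ} (he0 : 0 ≤ e) (n : ℕ) :
    n * truncValMean p k e - (k + e) ≤ ∑ i ∈ range n, truncVal k e (α - (i : ℤ_[p])) := by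
  have hswap : ∑ i ∈ range n, truncVal k e (α - (i : ℤ_[p])) =
      (∑ j ∈ Icc 1 k, (#{i ∈ range n | ‖α - ((i : ℕ) : ℤ_[p])‖ ≤ (p : ℝ)⁻¹ ^ j} : ℝ)) +
        e * #{i ∈ range n | ‖α - ((i : ℕ) : ℤ_[p])‖ ≤ (p : ℝ)⁻¹ ^ (k + 1)} := by
    simp only [truncVal, sum_add_distrib, ← mul_sum, ← sum_boole]
    rw [sum_comm]
  have hlow : ∑ j ∈ Icc 1 k, ((n : ℝ) * (p : ℝ)⁻¹ ^ j - 1) ≤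
      ∑ j ∈ Icc 1 k, (#{i ∈ range n | ‖α - ((i : ℕ) : ℤ_[p])‖ ≤ (p : ℝ)⁻¹ ^ j} : ℝ) :=
    sum_le_sum fun j _ => le_card_filter_norm_sub_natCast_le α j n
  have htop := mul_le_mul_of_nonneg_left (le_card_filter_norm_sub_natCast_le α (k + 1) n) he0
  rw [sum_sub_distrib, ← mul_sum, sum_const, Nat.card_Icc, Nat.add_sub_cancel,
    nsmul_one] at hlow
  rw [hswap, truncValMean]
  linarith

lemma prod_max_rpow_norm_sub_le (α : ℤ_[p]) (k : ℕ) {e : ℝ} (he0 : 0 ≤ e) (he1 : e ≤ 1)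
    (n : ℕ) : ∏ i ∈ range n, max ((p : ℝ)⁻¹ ^ ((k : ℝ) + e)) ‖α - (i : ℤ_[p])‖ ≤
      (p : ℝ)⁻¹ ^ (n * truncValMean p k e - (k + e)) := by
  have h0 := inv_natCast_prime_pos (p := p)
  calc ∏ i ∈ range n, max ((p : ℝ)⁻¹ ^ ((k : ℝ) + e)) ‖α - (i : ℤ_[p])‖
      ≤ ∏ i ∈ range n, (p : ℝ)⁻¹ ^ truncVal k e (α - (i : ℤ_[p])) :=
        prod_le_prod (fun _ _ => by positivity) fun i _ =>
          max_rpow_norm_le_rpow_truncVal _ k he0 he1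
    _ = (p : ℝ)⁻¹ ^ ∑ i ∈ range n, truncVal k e (α - (i : ℤ_[p])) :=
        (Real.rpow_sum_of_pos h0 _ _).symm
    _ ≤ _ := Real.rpow_le_rpow_of_exponent_ge h0 inv_natCast_prime_lt_one.le
        (le_sum_truncVal α k he0 n)

end PadicInt

section qPow

open PadicInt

variable {p : ℕ} [Fact p.Prime] {K : Type*} [NontriviallyNormedField K] {ι : ℚ_[p] →+* K}
  {q : K}

variable (ι q) in
noncomputable def qPow (α : ℤ_[p]) : K :=
  ∑' n, ι ((Ring.choose α n : ℤ_[p]) : ℚ_[p]) * (q - 1) ^ n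

lemma qPow_natCast (m : ℕ) : qPow ι q m = q ^ m := by
  have hsupp : ∀ n ∉ range (m + 1),
      ι ((Ring.choose (m : ℤ_[p]) n : ℤ_[p]) : ℚ_[p]) * (q - 1) ^ n = 0 := by
    intro n hn
    rw [Ring.choose_natCast, Nat.choose_eq_zero_of_lt (by simpa using hn)]
    simp
  rw [qPow, tsum_eq_sum hsupp, ← sub_add_cancel q 1, add_pow, sub_add_cancel]
  refine sum_congr rfl fun n _ => ?_
  rw [Ring.choose_natCast, one_pow, mul_one, mul_comm]
  simp

variable [CompleteSpace K]

lemma summable_qPow (hι : ∀ x, ‖ι x‖ = ‖x‖) (hq : ‖q - 1‖ < 1) (α : ℤ_[p]) :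
    Summable fun n => ι ((Ring.choose α n : ℤ_[p]) : ℚ_[p]) * (q - 1) ^ n := by
  refine .of_norm_bounded (summable_geometric_of_lt_one (norm_nonneg _) hq) fun n => ?_
  rw [norm_mul, norm_pow, hι, ← norm_def]
  exact mul_le_of_le_one_left (by positivity) (norm_le_one _)

variable [IsUltrametricDist K]

lemma norm_qPow_sub_qPow_le (hι : ∀ x, ‖ι x‖ = ‖x‖) (hq : ‖q - 1‖ ≤ normPi p) (α β : ℤ_[p]) :
    ‖qPow ι q α - qPow ι q β‖ ≤ ‖α - β‖ * ‖q - 1‖ := by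
  have hq1 : ‖q - 1‖ < 1 := hq.trans_lt normPi_lt_one
  rw [qPow, qPow, ← (summable_qPow hι hq1 α).tsum_sub (summable_qPow hι hq1 β)]
  refine IsUltrametricDist.norm_tsum_le_of_forall_le_of_nonneg (by positivity) fun n => ?_
  rw [← sub_mul, ← map_sub, ← PadicInt.coe_sub, norm_mul, norm_pow, hι, ← norm_def]
  exact norm_choose_sub_choose_mul_pow_le α β n (norm_nonneg _) hq

lemma norm_natCast_mul_le_norm_pow_sub_one (hι : ∀ x, ‖ι x‖ = ‖x‖) (hq : ‖q - 1‖ < normPi p)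
    (m : ℕ) : ‖(m : ℤ_[p])‖ * ‖q - 1‖ ≤ ‖q ^ m - 1‖ := by
  set r := ‖q - 1‖
  have hω := normPi_pos (p := p)
  have hs : r / normPi p < 1 := (div_lt_one hω).mpr hq
  set f : ℕ → K := fun n => ι ((Ring.choose (m : ℤ_[p]) n : ℤ_[p]) : ℚ_[p]) * (q - 1) ^ n
  have hf : Summable f := summable_qPow hι (hq.trans normPi_lt_one) _
  set T := ∑' n, f (n + 2)
  have hsplit : q ^ m - 1 = ι (m : ℤ_[p]) * (q - 1) + T := by
    rw [← qPow_natCast (ι := ι), qPow, hf.tsum_eq_zero_add,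
      ((summable_nat_add_iff 1).mpr hf).tsum_eq_zero_add]
    simp [f, T]
  have hT : ‖T‖ ≤ ‖(m : ℤ_[p])‖ * r * (r / normPi p) := by
    refine IsUltrametricDist.norm_tsum_le_of_forall_le_of_nonneg (by positivity) fun n => ?_
    rw [norm_mul, norm_pow, hι, ← norm_def]
    calc ‖Ring.choose (m : ℤ_[p]) (n + 2)‖ * r ^ (n + 2)
        ≤ ‖(m : ℤ_[p])‖ * r * (r / normPi p) ^ (n + 2 - 1) :=
          norm_choose_mul_pow_le _ (by omega) (norm_nonneg _)
      _ ≤ ‖(m : ℤ_[p])‖ * r * (r / normPi p) := by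
          gcongr
          exact pow_le_of_le_one (by positivity) hs.le (by omega)
  have hle : ‖(m : ℤ_[p])‖ * r ≤ max ‖q ^ m - 1‖ ‖T‖ := by
    rw [show ‖(m : ℤ_[p])‖ * r = ‖(q ^ m - 1) + -T‖ by
      rw [hsplit, add_neg_cancel_right, norm_mul, hι, ← norm_def], ← norm_neg T]
    exact IsUltrametricDist.norm_add_le_max _ _
  -- The alternative `‖m‖ r ≤ ‖T‖ ≤ ‖m‖ r (r / |π|)` forces `‖m‖ r = 0`.
  rcases le_max_iff.mp hle with h | h
  · exact h
  · nlinarith [norm_nonneg (q ^ m - 1), mul_nonneg (norm_nonneg (m : ℤ_[p])) (norm_nonneg (q - 1))]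

end qPow

section qChoose

open PadicInt

variable {p : ℕ} [Fact p.Prime] {K : Type*} [NontriviallyNormedField K] [IsUltrametricDist K]
  [CompleteSpace K] {ι : ℚ_[p] →+* K} {q : K}

noncomputable def qChoose (q lam : K) (n : ℕ) : K :=
  (∏ i ∈ range n, (lam - q ^ i)) / ∏ i ∈ range n, (q ^ (i + 1) - 1)

lemma pow_le_norm_prod_pow_succ_sub_one (hι : ∀ x, ‖ι x‖ = ‖x‖) (hq : ‖q - 1‖ < normPi p)
    (n : ℕ) : (normPi p * ‖q - 1‖) ^ n ≤ ‖∏ i ∈ range n, (q ^ (i + 1) - 1)‖ := by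
  calc (normPi p * ‖q - 1‖) ^ n ≤ ‖(n.factorial : ℤ_[p])‖ * ‖q - 1‖ ^ n := by
        rw [mul_pow]
        gcongr
        exact normPi_pow_le_norm_factorial n
    _ = ∏ i ∈ range n, (‖((i + 1 : ℕ) : ℤ_[p])‖ * ‖q - 1‖) := by
        rw [prod_mul_distrib, prod_const, card_range, ← prod_range_add_one_eq_factorial,
          Nat.cast_prod, norm_prod]
    _ ≤ ∏ i ∈ range n, ‖q ^ (i + 1) - 1‖ :=
        prod_le_prod (fun _ _ => by positivity) fun i _ =>
          norm_natCast_mul_le_norm_pow_sub_one hι hq (i + 1)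
    _ = _ := (norm_prod _ _).symm

lemma norm_prod_sub_pow_le (hι : ∀ x, ‖ι x‖ = ‖x‖) (hq : ‖q - 1‖ ≤ normPi p) {lam : K}
    {α : ℤ_[p]} {c : ℝ} (hα : ‖lam - qPow ι q α‖ ≤ c * ‖q - 1‖) (n : ℕ) :
    ‖∏ i ∈ range n, (lam - q ^ i)‖ ≤ ∏ i ∈ range n, (max c ‖α - i‖ * ‖q - 1‖) := by
  rw [norm_prod]
  refine prod_le_prod (fun _ _ => norm_nonneg _) fun i _ => ?_
  calc ‖lam - q ^ i‖ = ‖(lam - qPow ι q α) + (qPow ι q α - qPow ι q i)‖ := by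
        rw [qPow_natCast, sub_add_sub_cancel]
    _ ≤ max ‖lam - qPow ι q α‖ ‖qPow ι q α - qPow ι q i‖ :=
        IsUltrametricDist.norm_add_le_max _ _
    _ ≤ max (c * ‖q - 1‖) (‖α - i‖ * ‖q - 1‖) :=
        max_le_max hα (norm_qPow_sub_qPow_le hι hq α i)
    _ = max c ‖α - i‖ * ‖q - 1‖ := (max_mul_of_nonneg _ _ (norm_nonneg _)).symm

lemma norm_qChoose_le (hι : ∀ x, ‖ι x‖ = ‖x‖) (hq : ‖q - 1‖ < normPi p) (hq1 : q ≠ 1)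
    {lam : K} {α : ℤ_[p]} {k : ℕ} {e C : ℝ} (he0 : 0 ≤ e) (he1 : e ≤ 1) (hC : 1 ≤ C)
    (hα : ‖lam - qPow ι q α‖ ≤ C * (p : ℝ)⁻¹ ^ ((k : ℝ) + e) * ‖q - 1‖) (n : ℕ) :
    ‖qChoose q lam n‖ ≤
      (p : ℝ)⁻¹ ^ (-((k : ℝ) + e)) * (C * (p : ℝ)⁻¹ ^ truncValMean p k e / normPi p) ^ n := by
  set r := ‖q - 1‖
  set t : ℝ := (p : ℝ)⁻¹ ^ ((k : ℝ) + e)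
  have hr : 0 < r := norm_pos_iff.mpr (sub_ne_zero.mpr hq1)
  have hp0 := inv_natCast_prime_pos (p := p)
  have hω := normPi_pos (p := p)
  have hmax (a : ℝ) (ha : 0 ≤ a) : max (C * t) a * r ≤ C * r * max t a := by
    rw [mul_right_comm]
    refine mul_le_mul_of_nonneg_right (max_le ?_ ?_) hr.le
    · exact mul_le_mul_of_nonneg_left (le_max_left t a) (by linarith)
    · exact (le_max_right t a).trans (le_mul_of_one_le_left (by positivity) hC)
  have hnum : ‖∏ i ∈ range n, (lam - q ^ i)‖ ≤
      (C * r) ^ n * (p : ℝ)⁻¹ ^ (n * truncValMean p k e - (k + e)) :=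
    calc ‖∏ i ∈ range n, (lam - q ^ i)‖ ≤ ∏ i ∈ range n, (max (C * t) ‖α - i‖ * r) :=
          norm_prod_sub_pow_le hι hq.le hα n
      _ ≤ ∏ i ∈ range n, (C * r * max t ‖α - i‖) :=
          prod_le_prod (fun _ _ => by positivity) fun i _ => hmax _ (norm_nonneg _)
      _ = (C * r) ^ n * ∏ i ∈ range n, max t ‖α - i‖ := by
          rw [prod_mul_distrib, prod_const, card_range]
      _ ≤ _ := by
          gcongr
          exact prod_max_rpow_norm_sub_le α k he0 he1 n
  have hden := pow_le_norm_prod_pow_succ_sub_one hι hq n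
  rw [qChoose, norm_div, div_le_iff₀ ((pow_pos (by positivity) n).trans_le hden)]
  calc ‖∏ i ∈ range n, (lam - q ^ i)‖
      ≤ (C * r) ^ n * (p : ℝ)⁻¹ ^ (n * truncValMean p k e - (k + e)) := hnum
    _ = (p : ℝ)⁻¹ ^ (-((k : ℝ) + e)) * (C * (p : ℝ)⁻¹ ^ truncValMean p k e / normPi p) ^ n *
          (normPi p * r) ^ n := by
        rw [sub_eq_neg_add, Real.rpow_add hp0, mul_comm (n : ℝ), Real.rpow_mul hp0.le,
          Real.rpow_natCast, div_pow, mul_pow, mul_pow, mul_pow]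
        field_simp
    _ ≤ _ := by gcongr

theorem summable_qChoose_mul_pow (hι : ∀ x, ‖ι x‖ = ‖x‖) (hq : ‖q - 1‖ < normPi p)
    (hq1 : q ≠ 1) {lam : K} {α : ℤ_[p]} {k : ℕ} {e C : ℝ} (he0 : 0 ≤ e) (he1 : e ≤ 1)
    (hC : 1 ≤ C) (hα : ‖lam - qPow ι q α‖ ≤ C * (p : ℝ)⁻¹ ^ ((k : ℝ) + e) * ‖q - 1‖) {x : K}
    (hx : C * (p : ℝ)⁻¹ ^ truncValMean p k e * ‖x‖ < normPi p) :
    Summable fun n => qChoose q lam n * x ^ n := by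
  have hp0 := inv_natCast_prime_pos (p := p)
  have hω := normPi_pos (p := p)
  have hratio : C * (p : ℝ)⁻¹ ^ truncValMean p k e / normPi p * ‖x‖ < 1 := by
    rwa [div_mul_eq_mul_div, div_lt_one hω]
  refine .of_norm_bounded ((summable_geometric_of_lt_one (by positivity) hratio).mul_left
      ((p : ℝ)⁻¹ ^ (-((k : ℝ) + e)))) fun n => ?_
  rw [norm_mul, norm_pow, mul_pow, ← mul_assoc]
  gcongr
  exact norm_qChoose_le hι hq hq1 he0 he1 hC hα n

end qChoose

lemma normPi_div_rpow_truncValMean {p : ℕ} [Fact p.Prime] (k : ℕ) (e : ℝ) :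
    normPi p / (p : ℝ)⁻¹ ^ PadicInt.truncValMean p k e =
      (p : ℝ)⁻¹ ^ (-(1 / (p : ℝ) ^ k) * (e / p - 1 / ((p : ℝ) - 1))) := by
  have hP := one_lt_natCast_prime (p := p)
  have hp0 : (0 : ℝ) ≤ p := by linarith
  have hp1 : (p : ℝ) - 1 ≠ 0 := by linarith
  rw [normPi, Real.inv_rpow hp0, Real.inv_rpow hp0, div_inv_eq_mul,
    ← Real.rpow_add (by linarith), PadicInt.truncValMean, sum_Icc_inv_natCast_prime_pow,
    ← Real.rpow_neg hp0]
  congr 1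
  rw [inv_pow, inv_pow]
  field_simp
  ring

lemma exists_one_lt_mul_lt {a b : ℝ} (ha : 0 ≤ a) (hab : a < b) : ∃ c, 1 < c ∧ c * a < b := by
  have hb : 0 < a + b := by linarith
  refine ⟨2 * b / (a + b), (one_lt_div hb).mpr (by linarith), ?_⟩
  rw [div_mul_eq_mul_div, div_lt_iff₀ hb]
  nlinarith

theorem lambda_series_radius_of_dist_general {p : ℕ} [Fact p.Prime] {K : Type*}
    [NontriviallyNormedField K] [IsUltrametricDist K] [CompleteSpace K]
    (ι : ℚ_[p] →+* K) (hι : ∀ x : ℚ_[p], ‖ι x‖ = ‖x‖)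
    (q : K) (hroot : ∀ n : ℕ, 0 < n → q ^ n ≠ 1)
    (hq1 : ‖1 - q‖ < (p : ℝ) ^ (-(1 : ℝ) / ((p : ℝ) - 1)))
    (lam : K) (k : ℕ) (ε : ℝ) (hε0 : 0 ≤ ε) (hε1 : ε < 1)
    (hdist : (⨅ α : ℤ_[p],
        ‖lam - ∑' n : ℕ,
          ι ((∏ i ∈ Finset.range n, ((α : ℚ_[p]) - (i : ℚ_[p]))) / (n.factorial : ℚ_[p]))
            * (q - 1) ^ n‖)
      = ((p : ℝ)⁻¹) ^ ((k : ℝ) + ε) * ‖q - 1‖) :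
    ∀ x : K, ‖x‖ < ((p : ℝ)⁻¹) ^ (-(1 / (p : ℝ) ^ k) * (ε / p - 1 / ((p : ℝ) - 1))) →
      Summable fun n : ℕ =>
        (∏ i ∈ Finset.range n, (lam - q ^ i)) /
          (∏ i ∈ Finset.range n, (q ^ (i + 1) - 1)) * x ^ n := by
  intro x hx
  have hq : ‖q - 1‖ < normPi p := by rwa [norm_sub_rev] at hq1
  have hq_ne : q ≠ 1 := fun h => hroot 1 one_pos (by rw [h, one_pow])
  have hθ : 0 < (p : ℝ)⁻¹ ^ PadicInt.truncValMean p k ε :=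
    Real.rpow_pos_of_pos inv_natCast_prime_pos _
  rw [← normPi_div_rpow_truncValMean, lt_div_iff₀ hθ, mul_comm] at hx
  -- The infimum need not be attained: lose a factor `C > 1`, paid for by the strict bound on `x`.
  obtain ⟨C, hC, hCx⟩ := exists_one_lt_mul_lt (by positivity) hx
  have hdist_lt : (p : ℝ)⁻¹ ^ ((k : ℝ) + ε) * ‖q - 1‖ <
      C * (p : ℝ)⁻¹ ^ ((k : ℝ) + ε) * ‖q - 1‖ := by
    rw [mul_assoc]
    exact lt_mul_of_one_lt_left (mul_pos (Real.rpow_pos_of_pos inv_natCast_prime_pos _)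
      (norm_pos_iff.mpr (sub_ne_zero.mpr hq_ne))) hC
  obtain ⟨α, hα⟩ : ∃ α : ℤ_[p], ‖lam - qPow ι q α‖ < C * (p : ℝ)⁻¹ ^ ((k : ℝ) + ε) * ‖q - 1‖ := by
    simpa only [qPow, PadicInt.coe_choose_eq] using exists_lt_of_ciInf_lt (hdist ▸ hdist_lt)
  exact summable_qChoose_mul_pow hι hq hq_ne hε0 hε1.le hC.le hα.le (by rwa [mul_assoc])

/-- If `dist(λ, q^{ℤ_p}) = |p|^{k+ε}|q-1|` with `k ∈ ℤ_{≥0}`, `ε ∈ [0,1)`, then the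
series `Λ(x) = Σ_{n≥1} ((λ-1)(λ-q)⋯(λ-q^{n-1})/((q-1)⋯(q^n-1))) x^n` converges for
`|x| < |p|^{-(1/p^k)(ε/p - 1/(p-1))}`. Here `q^α`, `α ∈ ℤ_p`, is the sum of the
binomial series `Σ_n binom(α,n)(q-1)^n`, the p-adic binomial coefficients being
viewed in `K` through the canonical isometric embedding of `ℚ_p`. -/
theorem lambda_series_radius_of_dist {p : ℕ} [Fact p.Prime] {K : Type*}
    [NontriviallyNormedField K] [IsUltrametricDist K] [CompleteSpace K] [IsAlgClosed K]
    (ι : ℚ_[p] →+* K) (hι : ∀ x : ℚ_[p], ‖ι x‖ = ‖x‖)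
    (q : K) (hq : ‖q‖ = 1) (hroot : ∀ n : ℕ, 0 < n → q ^ n ≠ 1)
    (hq1 : ‖1 - q‖ < (p : ℝ) ^ (-(1 : ℝ) / ((p : ℝ) - 1)))
    (lam : K) (k : ℕ) (ε : ℝ) (hε0 : 0 ≤ ε) (hε1 : ε < 1)
    (hdist : (⨅ α : ℤ_[p],
        ‖lam - ∑' n : ℕ,
          ι ((∏ i ∈ Finset.range n, ((α : ℚ_[p]) - (i : ℚ_[p]))) / (n.factorial : ℚ_[p]))
            * (q - 1) ^ n‖)
      = ((p : ℝ)⁻¹) ^ ((k : ℝ) + ε) * ‖q - 1‖) :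
    ∀ x : K, ‖x‖ < ((p : ℝ)⁻¹) ^ (-(1 / (p : ℝ) ^ k) * (ε / p - 1 / ((p : ℝ) - 1))) →
      Summable fun n : ℕ =>
        (∏ i ∈ Finset.range n, (lam - q ^ i)) /
          (∏ i ∈ Finset.range n, (q ^ (i + 1) - 1)) * x ^ n :=
  lambda_series_radius_of_dist_general ι hι q hroot hq1 lam k ε hε0 hε1 hdist
end

section
/- For α ∈ K not in q^ℤ, the basic hypergeometric series Φ(x) = Σ_{n≥0} (1-q)^n x^n / ((1-qα)(1-q²α)···(1-q^n α)) factors as Φ(x) = ((1-α)/(1-q)) · e_q(x) · g_α(x), where e_q(x) = Σ_{n≥0} x^n/[n]_q^! and g_α(x) = Σ_{n≥0} q^{n(n+1)/2} (-x)^n/[n]_q^! · (1-q)/(1-q^n α), as an identity of formal power series. -/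
/-- The q-integer `[n]_q = 1 + q + ... + q^{n-1}`. -/
def qInt {K : Type*} [Field K] (q : K) (n : ℕ) : K := ∑ i ∈ Finset.range n, q ^ i

/-- The q-factorial `[n]_q^! = [1]_q ⋯ [n]_q`. -/
def qFact {K : Type*} [Field K] (q : K) : ℕ → K
  | 0 => 1
  | n + 1 => qFact q n * qInt q (n + 1)

/-!
Writing `L F = F(x) - α F(qx)`, the coefficients of `Φ` obey
`(1 - q^{n+1} α) c_{n+1} = (1 - q) c_n`, i.e. `L Φ = (1 - α) + (1 - q) x Φ`, and this functional
equation has at most one solution since `1 - q^n α ≠ 0`. The right-hand side satisfies it as well.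
Indeed, let `E_q(x) = ∑ q^{n(n-1)/2} x^n / [n]_q^!` be the big `q`-exponential; the `q`-derivative
fixes `e_q` and sends `E_q(x)` to `E_q(qx)`, whence `e_q(qx) = (1 - (1 - q) x) e_q(x)` and
`E_q(x) = (1 + (1 - q) x) E_q(qx)`. So `e_q(x) E_q(-x)` is invariant under `x ↦ qx`, hence equal
to `1`, and `L g_α = (1 - q) E_q(-qx)` finishes the computation.
-/

open PowerSeries

theorem mul_add_one_div_two_eq_choose_two_add (n : ℕ) : n * (n + 1) / 2 = n.choose 2 + n := by
  have h := Nat.choose_two_right (n + 1)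
  rw [Nat.add_sub_cancel, Nat.choose_succ_succ, Nat.choose_one_right] at h
  rw [mul_comm, ← h, add_comm]

section

variable {K : Type*} [Field K]

theorem one_sub_mul_qInt (q : K) (n : ℕ) : (1 - q) * qInt q n = 1 - q ^ n := by
  rw [qInt, mul_comm, geom_sum_mul_neg]

theorem qFact_succ (q : K) (n : ℕ) : qFact q (n + 1) = qFact q n * qInt q (n + 1) := rfl

theorem qInt_ne_zero {q : K} (hq : ∀ n : ℕ, 0 < n → q ^ n ≠ 1) {n : ℕ} (hn : 0 < n) :
    qInt q n ≠ 0 := by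
  intro h
  have h' := one_sub_mul_qInt q n
  rw [h, mul_zero] at h'
  exact hq n hn (sub_eq_zero.mp h'.symm).symm

theorem qFact_ne_zero {q : K} (hq : ∀ n : ℕ, 0 < n → q ^ n ≠ 1) : ∀ n, qFact q n ≠ 0
  | 0 => one_ne_zero
  | n + 1 => mul_ne_zero (qFact_ne_zero hq n) (qInt_ne_zero hq n.succ_pos)

theorem one_sub_pow_mul_ne_zero {q α : K} (hα : ∀ m : ℤ, α ≠ q ^ m) (n : ℕ) :
    1 - q ^ n * α ≠ 0 := by
  intro h
  apply hα (-n)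
  rw [zpow_neg, zpow_natCast]
  exact eq_inv_of_mul_eq_one_right (sub_eq_zero.mp h).symm

end

namespace PowerSeries

section

variable {R : Type*} [CommSemiring R]

theorem rescale_C (a r : R) : rescale a (C r) = C r := by
  ext (_ | n) <;> simp [coeff_C]

end

section

variable {R : Type*} [CommRing R]

theorem coeff_sub_C_mul_rescale (q α : R) (F : R⟦X⟧) (n : ℕ) :
    coeff n (F - C α * rescale q F) = (1 - q ^ n * α) * coeff n F := by
  simp only [map_sub, coeff_C_mul, coeff_rescale]
  ring

variable [NoZeroDivisors R]

theorem eq_of_sub_C_mul_rescale_eq {q α a b : R} (hα : ∀ n : ℕ, 1 - q ^ n * α ≠ 0)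
    {F G : R⟦X⟧} (hF : F - C α * rescale q F = C a + C b * X * F)
    (hG : G - C α * rescale q G = C a + C b * X * G) : F = G := by
  rw [← sub_eq_zero]
  set D := F - G
  have hD : D - C α * rescale q D = C b * X * D := by
    simp only [D, map_sub]
    linear_combination hF - hG
  ext n
  rw [map_zero]
  induction n with
  | zero =>
    have h0 := congrArg (coeff 0) hD
    rw [coeff_sub_C_mul_rescale, mul_assoc, coeff_C_mul, coeff_zero_X_mul, mul_zero] at h0
    simpa using (mul_eq_zero.mp h0).resolve_left (hα 0)
  | succ n ih =>
    have hn := congrArg (coeff (n + 1)) hD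
    rw [coeff_sub_C_mul_rescale, mul_assoc, coeff_C_mul, coeff_succ_X_mul, ih, mul_zero] at hn
    simpa using (mul_eq_zero.mp hn).resolve_left (hα (n + 1))

theorem eq_C_of_rescale_eq {q : R} (hq : ∀ n : ℕ, 0 < n → q ^ n ≠ 1) {F : R⟦X⟧}
    (h : rescale q F = F) : F = C (constantCoeff F) := by
  ext (_ | n)
  · simp
  · have hn := congrArg (coeff (n + 1)) h
    rw [coeff_rescale] at hn
    have : (q ^ (n + 1) - 1) * coeff (n + 1) F = 0 := by linear_combination hn
    simpa [coeff_C] using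
      (mul_eq_zero.mp this).resolve_left (sub_ne_zero.mpr (hq (n + 1) n.succ_pos))

end

variable {K : Type*} [Field K]

noncomputable def qDeriv (q : K) (F : K⟦X⟧) : K⟦X⟧ :=
  mk fun n => qInt q (n + 1) * coeff (n + 1) F

theorem sub_rescale_eq_X_mul_qDeriv (q : K) (F : K⟦X⟧) :
    F - rescale q F = C (1 - q) * X * qDeriv q F := by
  ext (_ | n)
  · rw [map_sub, coeff_rescale, pow_zero, one_mul, sub_self, mul_assoc, coeff_C_mul,
      coeff_zero_X_mul, mul_zero]
  · rw [mul_assoc, coeff_C_mul, coeff_succ_X_mul, qDeriv, coeff_mk, ← mul_assoc,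
      one_sub_mul_qInt, map_sub, coeff_rescale]
    ring

noncomputable def smallQExp (q : K) : K⟦X⟧ :=
  mk fun n => 1 / qFact q n

noncomputable def bigQExp (q : K) : K⟦X⟧ :=
  mk fun n => q ^ n.choose 2 / qFact q n

theorem qDeriv_smallQExp {q : K} (hq : ∀ n : ℕ, 0 < n → q ^ n ≠ 1) :
    qDeriv q (smallQExp q) = smallQExp q := by
  ext n
  have := qFact_ne_zero hq n
  have := qInt_ne_zero hq n.succ_pos
  simp only [qDeriv, smallQExp, coeff_mk, qFact_succ]
  field_simp

theorem qDeriv_bigQExp {q : K} (hq : ∀ n : ℕ, 0 < n → q ^ n ≠ 1) :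
    qDeriv q (bigQExp q) = rescale q (bigQExp q) := by
  ext n
  have := qFact_ne_zero hq n
  have := qInt_ne_zero hq n.succ_pos
  simp only [qDeriv, bigQExp, coeff_mk, coeff_rescale, qFact_succ, Nat.choose_succ_succ,
    Nat.choose_one_right, pow_add]
  field_simp

theorem rescale_smallQExp {q : K} (hq : ∀ n : ℕ, 0 < n → q ^ n ≠ 1) :
    rescale q (smallQExp q) = (1 - C (1 - q) * X) * smallQExp q := by
  have h := sub_rescale_eq_X_mul_qDeriv q (smallQExp q)
  rw [qDeriv_smallQExp hq] at h
  linear_combination -h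

theorem rescale_neg_one_bigQExp {q : K} (hq : ∀ n : ℕ, 0 < n → q ^ n ≠ 1) :
    rescale (-1) (bigQExp q) = (1 - C (1 - q) * X) * rescale q (rescale (-1) (bigQExp q)) := by
  have h := sub_rescale_eq_X_mul_qDeriv q (bigQExp q)
  rw [qDeriv_bigQExp hq] at h
  have h' := congrArg (rescale (-1)) h
  rw [map_sub, map_mul, map_mul, rescale_C, rescale_neg_one_X, rescale_rescale, mul_neg_one] at h'
  rw [rescale_rescale, neg_one_mul]
  linear_combination h'

theorem smallQExp_mul_rescale_neg_one_bigQExp {q : K} (hq : ∀ n : ℕ, 0 < n → q ^ n ≠ 1) :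
    smallQExp q * rescale (-1) (bigQExp q) = 1 := by
  have hfix : rescale q (smallQExp q * rescale (-1) (bigQExp q))
      = smallQExp q * rescale (-1) (bigQExp q) := by
    rw [map_mul, rescale_smallQExp hq]
    linear_combination -smallQExp q * rescale_neg_one_bigQExp hq
  rw [eq_C_of_rescale_eq hq hfix, map_mul, ← coeff_zero_eq_constantCoeff_apply,
    ← coeff_zero_eq_constantCoeff_apply, coeff_rescale]
  simp [smallQExp, bigQExp, qFact]

end PowerSeries

section

variable {K : Type*} [Field K]

noncomputable def basicHypergeomSeries (q α : K) : K⟦X⟧ :=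
  mk fun n => (1 - q) ^ n / ∏ i ∈ Finset.range n, (1 - q ^ (i + 1) * α)

noncomputable def gSeries (q α : K) : K⟦X⟧ :=
  mk fun n => q ^ (n * (n + 1) / 2) * (-1 : K) ^ n / qFact q n * ((1 - q) / (1 - q ^ n * α))

theorem basicHypergeomSeries_sub_C_mul_rescale {q α : K} (hα : ∀ m : ℤ, α ≠ q ^ m) :
    basicHypergeomSeries q α - C α * rescale q (basicHypergeomSeries q α)
      = C (1 - α) + C (1 - q) * X * basicHypergeomSeries q α := by
  ext (_ | n)
  · rw [coeff_sub_C_mul_rescale, map_add, coeff_C, if_pos rfl, mul_assoc, coeff_C_mul,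
      coeff_zero_X_mul, mul_zero, add_zero]
    simp [basicHypergeomSeries]
  · rw [coeff_sub_C_mul_rescale, map_add, coeff_C, if_neg n.succ_ne_zero, zero_add, mul_assoc,
      coeff_C_mul, coeff_succ_X_mul]
    have := one_sub_pow_mul_ne_zero hα (n + 1)
    have : ∏ i ∈ Finset.range n, (1 - q ^ (i + 1) * α) ≠ 0 :=
      Finset.prod_ne_zero_iff.mpr fun i _ => one_sub_pow_mul_ne_zero hα (i + 1)
    simp only [basicHypergeomSeries, coeff_mk, Finset.prod_range_succ]
    field_simp
    ring

theorem gSeries_sub_C_mul_rescale {q α : K} (hα : ∀ m : ℤ, α ≠ q ^ m) :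
    gSeries q α - C α * rescale q (gSeries q α) = C (1 - q) * rescale (-q) (bigQExp q) := by
  ext n
  have := one_sub_pow_mul_ne_zero hα n
  rw [coeff_sub_C_mul_rescale, coeff_C_mul, coeff_rescale]
  simp only [gSeries, bigQExp, coeff_mk, mul_add_one_div_two_eq_choose_two_add, pow_add]
  rw [neg_pow q]
  field_simp

theorem smallQExp_mul_gSeries_sub_C_mul_rescale {q α : K} (hq : ∀ n : ℕ, 0 < n → q ^ n ≠ 1)
    (hα : ∀ m : ℤ, α ≠ q ^ m) :
    smallQExp q * gSeries q α - C α * rescale q (smallQExp q * gSeries q α)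
      = C (1 - q) + C (1 - q) * X * (smallQExp q * gSeries q α) := by
  have hinv : rescale q (smallQExp q) * rescale (-q) (bigQExp q) = 1 := by
    rw [← neg_one_mul, rescale_mul, RingHom.comp_apply, ← map_mul,
      smallQExp_mul_rescale_neg_one_bigQExp hq, map_one]
  rw [map_mul]
  linear_combination rescale q (smallQExp q) * gSeries_sub_C_mul_rescale hα
    - gSeries q α * rescale_smallQExp hq + C (1 - q) * hinv

end

theorem hypergeometric_factorization_general {K : Type*} [Field K]
    (q : K) (hroot : ∀ n : ℕ, 0 < n → q ^ n ≠ 1)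
    (α : K) (hα : ∀ m : ℤ, α ≠ q ^ m) :
    (PowerSeries.mk fun n : ℕ =>
        (1 - q) ^ n / ∏ i ∈ Finset.range n, (1 - q ^ (i + 1) * α))
      = PowerSeries.C ((1 - α) / (1 - q)) *
        (PowerSeries.mk fun n : ℕ => 1 / qFact q n) *
        (PowerSeries.mk fun n : ℕ =>
          q ^ (n * (n + 1) / 2) * (-1 : K) ^ n / qFact q n *
            ((1 - q) / (1 - q ^ n * α))) := by
  have hq : (1 : K) - q ≠ 0 := sub_ne_zero.mpr fun h => hroot 1 one_pos (by rw [pow_one, ← h])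
  change basicHypergeomSeries q α = C ((1 - α) / (1 - q)) * smallQExp q * gSeries q α
  refine eq_of_sub_C_mul_rescale_eq (one_sub_pow_mul_ne_zero hα)
    (basicHypergeomSeries_sub_C_mul_rescale hα) ?_
  have hC : C (1 - α) = C ((1 - α) / (1 - q)) * C (1 - q) := by
    rw [← map_mul, div_mul_cancel₀ _ hq]
  rw [mul_assoc, map_mul, rescale_C, hC]
  linear_combination C ((1 - α) / (1 - q)) * smallQExp_mul_gSeries_sub_C_mul_rescale hroot hα

/-- Factorization of the basic hypergeometric series `₁Φ₁(q;αq;q;(1-q)x)`: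
`Φ(x) = ((1-α)/(1-q)) e_q(x) g_α(x)` as formal power series. -/
theorem hypergeometric_factorization {K : Type*} [Field K] [CharZero K]
    (q : K) (hroot : ∀ n : ℕ, 0 < n → q ^ n ≠ 1)
    (α : K) (hα : ∀ m : ℤ, α ≠ q ^ m) :
    (PowerSeries.mk fun n : ℕ =>
        (1 - q) ^ n / ∏ i ∈ Finset.range n, (1 - q ^ (i + 1) * α))
      = PowerSeries.C ((1 - α) / (1 - q)) *
        (PowerSeries.mk fun n : ℕ => 1 / qFact q n) *
        (PowerSeries.mk fun n : ℕ =>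
          q ^ (n * (n + 1) / 2) * (-1 : K) ^ n / qFact q n *
            ((1 - q) / (1 - q ^ n * α))) :=
  hypergeometric_factorization_general q hroot α hα
end
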